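/- arXiv:1412.4655 — 8 statements merged into one kernel-verified Lean document; each statement's English description precedes it below -/
import Mathlib

section
/- For every natural number p and every real number t that is not a nonpositive integer, Γ(p+1+t)/p! = t · Σ_{i=0}^{p} Γ(i+t)/i!. -/
open Real Nat Finset

theorem Real.Gamma_add_one_div_factorial_succ {s : ℝ} (hs : s ≠ 0) (n : ℕ) :
    Gamma (s + 1) / (n + 1)! = Gamma s / n ! + (s - (n + 1)) * (Gamma s / (n + 1)!) := by
  rw [Gamma_add_one hs, factorial_succ]
  push_cast
  field_simp
  ring

theorem gamma_sum_identity (p : ℕ) (t : ℝ) (ht : ∀ n : ℕ, t ≠ -(n : ℝ)) :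
    Real.Gamma ((p : ℝ) + 1 + t) / (p.factorial : ℝ)
      = t * ∑ i ∈ Finset.range (p + 1), Real.Gamma ((i : ℝ) + t) / (i.factorial : ℝ) := by
  have shift_ne_zero (n : ℕ) : (n : ℝ) + t ≠ 0 := fun h => ht n (by linarith)
  induction p with
  | zero => simpa [add_comm] using Gamma_add_one (shift_ne_zero 0)
  | succ n ih =>
    rw [sum_range_succ, mul_add, ← ih]
    have step := Gamma_add_one_div_factorial_succ (shift_ne_zero (n + 1)) n
    push_cast at step ⊢
    convert step using 3 <;> ring
end

section
/- Gautschi's inequality: for real numbers r and x with 0 < r < 1 and x > 0, one has x^{1-r} ≤ Γ(x+1)/Γ(x+r) ≤ (x+1)^{1-r}. -/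
/-!
Log-convexity of `Γ` between `s` and `s + 1`, combined with `Γ (s + 1) = s Γ s`, gives Wendel's
inequality `Γ (s + t) ≤ s ^ t Γ s` for `0 < t < 1`. Taking `(s, t) = (x, r)` gives the lower bound,
and `(s, t) = (x + r, 1 - r)` together with `x + r ≤ x + 1` gives the upper bound.
-/

open Real

theorem Real.Gamma_add_le_rpow_mul_Gamma {s t : ℝ} (hs : 0 < s) (ht0 : 0 < t) (ht1 : t < 1) :
    Gamma (s + t) ≤ s ^ t * Gamma s := by
  have hΓ : 0 < Gamma s := Gamma_pos_of_pos hs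
  have hconv := Gamma_mul_add_mul_le_rpow_Gamma_mul_rpow_Gamma hs (by linarith : 0 < s + 1)
    (by linarith : 0 < 1 - t) ht0 (by ring)
  calc Gamma (s + t) = Gamma ((1 - t) * s + t * (s + 1)) := by ring_nf
    _ ≤ Gamma s ^ (1 - t) * Gamma (s + 1) ^ t := hconv
    _ = Gamma s ^ (1 - t) * (s ^ t * Gamma s ^ t) := by
      rw [Gamma_add_one hs.ne', mul_rpow hs.le hΓ.le]
    _ = s ^ t * Gamma s := by
      rw [mul_left_comm, ← rpow_add hΓ, sub_add_cancel, rpow_one]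

theorem gautschi_inequality (r x : ℝ) (hr0 : 0 < r) (hr1 : r < 1) (hx : 0 < x) :
    x ^ (1 - r) ≤ Real.Gamma (x + 1) / Real.Gamma (x + r) ∧
    Real.Gamma (x + 1) / Real.Gamma (x + r) ≤ (x + 1) ^ (1 - r) := by
  have hxr : 0 < x + r := by linarith
  have hΓxr : 0 < Gamma (x + r) := Gamma_pos_of_pos hxr
  constructor
  · rw [le_div_iff₀ hΓxr]
    calc x ^ (1 - r) * Gamma (x + r) ≤ x ^ (1 - r) * (x ^ r * Gamma x) := by
          gcongr; exact Gamma_add_le_rpow_mul_Gamma hx hr0 hr1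
      _ = Gamma (x + 1) := by
          rw [← mul_assoc, ← rpow_add hx, sub_add_cancel, rpow_one, Gamma_add_one hx.ne']
  · rw [div_le_iff₀ hΓxr]
    calc Gamma (x + 1) = Gamma (x + r + (1 - r)) := by ring_nf
      _ ≤ (x + r) ^ (1 - r) * Gamma (x + r) :=
          Gamma_add_le_rpow_mul_Gamma hxr (by linarith) (by linarith)
      _ ≤ (x + 1) ^ (1 - r) * Gamma (x + r) := by gcongr
end

section
/- Let α, β, γ be real numbers with α+β < 0, α+γ < 0, and α+β+γ < 0. Then there exist ω > 0 and C > 0 such that for all natural numbers m ≥ n: (m+1)^α (n+1)^β (m-n+1)^γ ≤ C (m+1)^{-ω} (n+1)^{-ω}. -/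
/-! With `A = m + 1`, `B = n + 1`, `D = m - n + 1` we have `B ≤ A`, `D ≤ A` and `A ≤ B * D`.
On this cone `A ^ a * B ^ b * D ^ c = (A / D) ^ (a + b) * (A / B) ^ (a + c) * (B * D / A) ^ (a + b + c)`,
a product of powers of numbers `≥ 1`, hence `≤ 1` as soon as `a + b`, `a + c`, `a + b + c ≤ 0`.
Taking `a = α + ω`, `b = β + ω`, `c = γ` for small `ω > 0` gives the estimate with `C = 1`. -/

open Real

lemma rpow_mul_rpow_mul_rpow_eq {A B D : ℝ} (hA : 0 < A) (hB : 0 < B) (hD : 0 < D) (a b c : ℝ) :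
    A ^ a * B ^ b * D ^ c
      = (A / D) ^ (a + b) * (A / B) ^ (a + c) * (B * D / A) ^ (a + b + c) := by
  have hBD : 0 < B * D := mul_pos hB hD
  simp only [rpow_def_of_pos, hA, hB, hD, hBD, div_pos, ← exp_add]
  rw [log_div hA.ne' hD.ne', log_div hA.ne' hB.ne', log_div hBD.ne' hA.ne', log_mul hB.ne' hD.ne']
  ring_nf

lemma rpow_mul_rpow_mul_rpow_le_one {A B D a b c : ℝ} (hB : 0 < B) (hD : 0 < D)
    (hBA : B ≤ A) (hDA : D ≤ A) (hABD : A ≤ B * D)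
    (hab : a + b ≤ 0) (hac : a + c ≤ 0) (habc : a + b + c ≤ 0) :
    A ^ a * B ^ b * D ^ c ≤ 1 := by
  have hA : 0 < A := hB.trans_le hBA
  rw [rpow_mul_rpow_mul_rpow_eq hA hB hD]
  have hAD : (A / D) ^ (a + b) ≤ 1 :=
    rpow_le_one_of_one_le_of_nonpos ((one_le_div hD).2 hDA) hab
  have hAB : (A / B) ^ (a + c) ≤ 1 :=
    rpow_le_one_of_one_le_of_nonpos ((one_le_div hB).2 hBA) hac
  have hBDA : (B * D / A) ^ (a + b + c) ≤ 1 :=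
    rpow_le_one_of_one_le_of_nonpos ((one_le_div hA).2 hABD) habc
  calc (A / D) ^ (a + b) * (A / B) ^ (a + c) * (B * D / A) ^ (a + b + c)
      ≤ 1 * 1 * 1 := by gcongr
    _ = 1 := by ring

theorem three_exponent_estimate (α β γ : ℝ)
    (h1 : α + β < 0) (h2 : α + γ < 0) (h3 : α + β + γ < 0) :
    ∃ ω > (0 : ℝ), ∃ C > (0 : ℝ), ∀ m n : ℕ, n ≤ m →
      ((m : ℝ) + 1) ^ α * ((n : ℝ) + 1) ^ β * ((m : ℝ) - (n : ℝ) + 1) ^ γ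
        ≤ C * ((m : ℝ) + 1) ^ (-ω) * ((n : ℝ) + 1) ^ (-ω) := by
  set ε := min (-(α + β)) (min (-(α + γ)) (-(α + β + γ)))
  have hε : 0 < ε := lt_min (by linarith) (lt_min (by linarith) (by linarith))
  have hεβ : ε ≤ -(α + β) := min_le_left _ _
  have hεγ : ε ≤ -(α + γ) := (min_le_right _ _).trans (min_le_left _ _)
  have hεβγ : ε ≤ -(α + β + γ) := (min_le_right _ _).trans (min_le_right _ _)
  refine ⟨ε / 2, by positivity, 1, one_pos, fun m n hnm => ?_⟩
  have hnm' : (n : ℝ) ≤ m := Nat.cast_le.2 hnm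
  have hn : (0 : ℝ) ≤ n := n.cast_nonneg
  set A : ℝ := (m : ℝ) + 1
  set B : ℝ := (n : ℝ) + 1
  set D : ℝ := (m : ℝ) - (n : ℝ) + 1
  have hA : 0 < A := by positivity
  have hB : 0 < B := by positivity
  have key : A ^ (α + ε / 2) * B ^ (β + ε / 2) * D ^ γ ≤ 1 :=
    rpow_mul_rpow_mul_rpow_le_one hB (by linarith) (by linarith) (by linarith)
      (by nlinarith) (by linarith) (by linarith) (by linarith)
  calc A ^ α * B ^ β * D ^ γ
      = (A ^ (α + ε / 2) * B ^ (β + ε / 2) * D ^ γ) * A ^ (-(ε / 2)) * B ^ (-(ε / 2)) := by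
        rw [rpow_add hA, rpow_add hB, rpow_neg hA.le, rpow_neg hB.le]
        field_simp
    _ ≤ 1 * A ^ (-(ε / 2)) * B ^ (-(ε / 2)) := by gcongr
end

section
/- Define real numbers Σ_{k,ℓ} for naturals k ≥ ℓ with k+ℓ even, depending on parameters 0 < u < 1 and σ > u - 1/2, by: Σ_{2m,0} = ∏_{i=1}^{m}(1 - (1-u)/i); Σ_{2m,2n} = Σ_{2m-1,2n-1} + u Σ_{j=0}^{n-1} [(n-1)! Γ(j+1/2+σ)/(j! Γ(n+1/2+σ))] Σ_{2m,2j} for n ≥ 1; and Σ_{2m+1,2n+1} = Σ_{2m,2n} - u Σ_{j=0}^{n} [n! Γ(j+1/2+σ)/(j! Γ(n+3/2+σ))] Σ_{2m,2j}. Then Σ_{k,ℓ} > 0 for all such k, ℓ. -/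
/-- Even–even part: `SigEE u σ m n` is `Σ_{2m,2n}` of the recursive definition. -/
noncomputable def SigEE (u σ : ℝ) : ℕ → ℕ → ℝ
  | m, 0 => ∏ i ∈ Finset.Icc 1 m, (1 - (1 - u) / (i : ℝ))
  | m, n + 1 =>
      (SigEE u σ (m - 1) n
        - u * ∑ j ∈ (Finset.range (n + 1)).attach,
            ((n.factorial : ℝ) * Real.Gamma ((j : ℕ) + 1/2 + σ) /
              ((j : ℕ).factorial * Real.Gamma ((n : ℝ) + 3/2 + σ))) * SigEE u σ (m - 1) (j : ℕ))
      + u * ∑ j ∈ (Finset.range (n + 1)).attach,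
            ((n.factorial : ℝ) * Real.Gamma ((j : ℕ) + 1/2 + σ) /
              ((j : ℕ).factorial * Real.Gamma (((n : ℝ) + 1) + 1/2 + σ))) * SigEE u σ m (j : ℕ)
  termination_by m n => n
  decreasing_by
  · omega
  · exact Finset.mem_range.mp j.2
  · exact Finset.mem_range.mp j.2

/-- Odd–odd part: `SigOO u σ m n` is `Σ_{2m+1,2n+1}` of the recursive definition. -/
noncomputable def SigOO (u σ : ℝ) (m n : ℕ) : ℝ :=
  SigEE u σ m n - u * ∑ j ∈ Finset.range (n + 1),
    ((n.factorial : ℝ) * Real.Gamma ((j : ℝ) + 1/2 + σ) /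
      ((j.factorial : ℝ) * Real.Gamma ((n : ℝ) + 3/2 + σ))) * SigEE u σ m j

/-!
Write `c n j = n! Γ(j+1/2+σ) / (j! Γ(n+3/2+σ))`; these weights are positive and
`∑_{j ≤ n} c n j = 1/(σ+1/2)`. Hence if the even row `j ↦ Σ_{2m,2j}` is positive and
nondecreasing on `j ≤ n`, then `Σ_{2m+1,2n+1} ≥ (1 - u/(σ+1/2)) Σ_{2m,2n} > 0`.
By the recursion, `Σ_{2m,2n+2} - Σ_{2m,2n}` is the odd entry built in the same way from the
backward difference `Σ_{2m-2,·} - Σ_{2m,·}`, and this difference satisfies the same (linear)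
recursion. So one proves by induction on `n`, simultaneously for all iterated differences
`Δᵏ` with `k + n ≤ m`, that row `m` of `Δᵏ Σ` is nondecreasing on `[0, n]`. The induction is
anchored in the first column: from `Σ_{2m+2,0} = (m+u)/(m+1) Σ_{2m,0}` one gets
`Δᵏ⁺¹ Σ_{2m+2,0} = (k+1-u)/(m+1) Δᵏ Σ_{2m,0}`, which is positive as `u < 1`.
-/

open Finset

lemma sum_range_Gamma_div_factorial {a : ℝ} (ha : 0 < a) (n : ℕ) :
    ∑ j ∈ range (n + 1), Real.Gamma (j + a) / j.factorial
      = Real.Gamma (n + 1 + a) / (a * n.factorial) := by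
  induction n with
  | zero =>
    simp [add_comm (1 : ℝ) a, Real.Gamma_add_one ha.ne', ha.ne']
  | succ n ih =>
    have hna : (n : ℝ) + 1 + a ≠ 0 := by positivity
    rw [sum_range_succ, ih, Nat.factorial_succ, Nat.cast_succ, Nat.cast_mul, Nat.cast_succ,
      show (n : ℝ) + 1 + 1 + a = (n + 1 + a) + 1 by ring, Real.Gamma_add_one hna]
    field_simp

noncomputable def sigmaCoeff (σ : ℝ) (n j : ℕ) : ℝ :=
  (n.factorial : ℝ) * Real.Gamma ((j : ℝ) + 1/2 + σ) /
    ((j.factorial : ℝ) * Real.Gamma ((n : ℝ) + 3/2 + σ))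

noncomputable def sigmaSum (σ : ℝ) (g : ℕ → ℝ) (n : ℕ) : ℝ :=
  ∑ j ∈ range (n + 1), sigmaCoeff σ n j * g j

/-- `oddRow u σ (SigEE u σ m) n` unfolds to `SigOO u σ m n`. -/
noncomputable def oddRow (u σ : ℝ) (g : ℕ → ℝ) (n : ℕ) : ℝ :=
  g n - u * sigmaSum σ g n

lemma sigmaCoeff_nonneg {σ : ℝ} (hσ : -(1/2) < σ) (n j : ℕ) : 0 ≤ sigmaCoeff σ n j := by
  have hj : 0 < Real.Gamma ((j : ℝ) + 1/2 + σ) :=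
    Real.Gamma_pos_of_pos (by linarith [j.cast_nonneg (α := ℝ)])
  have hn : 0 < Real.Gamma ((n : ℝ) + 3/2 + σ) :=
    Real.Gamma_pos_of_pos (by linarith [n.cast_nonneg (α := ℝ)])
  unfold sigmaCoeff
  positivity

lemma sum_sigmaCoeff {σ : ℝ} (hσ : -(1/2) < σ) (n : ℕ) :
    ∑ j ∈ range (n + 1), sigmaCoeff σ n j = 1 / (σ + 1/2) := by
  have ha : 0 < σ + 1/2 := by linarith
  have hG : Real.Gamma ((n : ℝ) + 3/2 + σ) ≠ 0 :=
    (Real.Gamma_pos_of_pos (by linarith [n.cast_nonneg (α := ℝ)])).ne'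
  have hsum := sum_range_Gamma_div_factorial ha n
  calc ∑ j ∈ range (n + 1), sigmaCoeff σ n j
      = n.factorial / Real.Gamma (n + 3/2 + σ) *
          ∑ j ∈ range (n + 1), Real.Gamma (j + (σ + 1/2)) / j.factorial := by
        rw [mul_sum]
        refine sum_congr rfl fun j _ => ?_
        rw [sigmaCoeff, show (j : ℝ) + (σ + 1/2) = j + 1/2 + σ by ring]
        field_simp
    _ = 1 / (σ + 1/2) := by
        rw [hsum, show (n : ℝ) + 1 + (σ + 1/2) = n + 3/2 + σ by ring]
        set G := Real.Gamma (n + 3/2 + σ)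
        field_simp

lemma sigmaSum_sub (σ : ℝ) (g h : ℕ → ℝ) (n : ℕ) :
    sigmaSum σ (g - h) n = sigmaSum σ g n - sigmaSum σ h n := by
  simp only [sigmaSum, Pi.sub_apply, mul_sub, sum_sub_distrib]

lemma oddRow_sub (u σ : ℝ) (g h : ℕ → ℝ) (n : ℕ) :
    oddRow u σ (g - h) n = oddRow u σ g n - oddRow u σ h n := by
  simp only [oddRow, sigmaSum_sub, Pi.sub_apply]
  ring

lemma sigmaSum_le_of_monotoneOn {σ : ℝ} (hσ : -(1/2) < σ) {g : ℕ → ℝ} {n : ℕ}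
    (hg : MonotoneOn g (Set.Iic n)) : sigmaSum σ g n ≤ g n / (σ + 1/2) := by
  calc sigmaSum σ g n ≤ ∑ j ∈ range (n + 1), sigmaCoeff σ n j * g n := by
        refine sum_le_sum fun j hj => mul_le_mul_of_nonneg_left ?_ (sigmaCoeff_nonneg hσ n j)
        have hjn : j ≤ n := Nat.lt_succ_iff.mp (mem_range.mp hj)
        exact hg (Set.mem_Iic.mpr hjn) Set.self_mem_Iic hjn
    _ = g n / (σ + 1/2) := by rw [← sum_mul, sum_sigmaCoeff hσ]; ring

lemma oddRow_pos_of_monotoneOn {u σ : ℝ} (hu : 0 ≤ u) (hσ : u - 1/2 < σ) {g : ℕ → ℝ}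
    {n : ℕ} (hg : MonotoneOn g (Set.Iic n)) (hg0 : 0 < g 0) : 0 < oddRow u σ g n := by
  have ha : 0 < σ + 1/2 := by linarith
  have hgn : 0 < g n := hg0.trans_le (hg (Set.mem_Iic.mpr n.zero_le) Set.self_mem_Iic n.zero_le)
  have hsum := mul_le_mul_of_nonneg_left (sigmaSum_le_of_monotoneOn (σ := σ) (by linarith) hg) hu
  have hlt : u * (g n / (σ + 1/2)) < g n := by
    rw [mul_div_assoc', div_lt_iff₀ ha]
    nlinarith
  unfold oddRow
  linarith

lemma monotoneOn_Iic_succ {α : Type*} [Preorder α] {g : ℕ → α} {n : ℕ}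
    (hg : MonotoneOn g (Set.Iic n)) (h : g n ≤ g (n + 1)) : MonotoneOn g (Set.Iic (n + 1)) := by
  intro i hi j hj hij
  rw [Set.mem_Iic] at hi hj
  rcases hj.lt_or_eq with hj | rfl
  · exact hg (Set.mem_Iic.mpr (by omega)) (Set.mem_Iic.mpr (by omega)) hij
  · rcases hi.lt_or_eq with hi | rfl
    · exact (hg (Set.mem_Iic.mpr (by omega)) Set.self_mem_Iic (by omega)).trans h
    · exact le_rfl

/-- The backward difference; note `bdiff a 0 = 0` because `0 - 1 = 0` in `ℕ`. -/
def bdiff {α : Type*} [AddGroup α] (a : ℕ → α) : ℕ → α := fun m => a (m - 1) - a m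

lemma iterate_bdiff_apply {α β : Type*} [AddGroup α] (k : ℕ) (f : ℕ → β → α) (m : ℕ) (x : β) :
    (bdiff^[k] f) m x = (bdiff^[k] fun m => f m x) m := by
  induction k generalizing f with
  | zero => rfl
  | succ k ih => exact ih (bdiff f)

lemma bdiff_succ_of_ratio {u : ℝ} {b : ℕ → ℝ} {k q : ℕ}
    (hb : b (q + 1) = ((q : ℝ) - k + u) / (q + 1) * b q) :
    bdiff b (q + 1) = ((k : ℝ) + 1 - u) / (q + 1) * b q := by
  rw [bdiff, Nat.add_sub_cancel, hb]
  field_simp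
  ring

lemma iterate_bdiff_pos_of_ratio {u : ℝ} (hu0 : 0 < u) (hu1 : u < 1) {a : ℕ → ℝ}
    (ha0 : 0 < a 0) (ha : ∀ m : ℕ, a (m + 1) = (m + u) / (m + 1) * a m) (k : ℕ) :
    ∀ m, k ≤ m → 0 < (bdiff^[k] a) m ∧
      (bdiff^[k] a) (m + 1) = ((m : ℝ) - k + u) / (m + 1) * (bdiff^[k] a) m := by
  induction k with
  | zero =>
    rintro m -
    refine ⟨?_, by simpa using ha m⟩
    induction m with
    | zero => exact ha0
    | succ m ih => rw [Function.iterate_zero_apply, ha]; exact mul_pos (by positivity) ih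
  | succ k ih =>
    rw [Function.iterate_succ']
    set b := bdiff^[k] a
    intro m hm
    obtain ⟨q, rfl⟩ : ∃ q, m = q + 1 := ⟨m - 1, by omega⟩
    obtain ⟨hbq, hbq'⟩ := ih q (by omega)
    obtain ⟨-, hbq1'⟩ := ih (q + 1) (by omega)
    have hk : (0 : ℝ) < k + 1 - u := by linarith [(k.cast_nonneg : (0 : ℝ) ≤ k)]
    simp only [Function.comp_apply]
    rw [bdiff_succ_of_ratio hbq', bdiff_succ_of_ratio hbq1', hbq']
    refine ⟨by positivity, ?_⟩
    push_cast
    field_simp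
    ring

/-- With `f m j` in the role of `Σ_{2m,2j}`, this is
`Σ_{2m,2n+2} = Σ_{2m-1,2n+1} + u ∑_{j ≤ n} c n j Σ_{2m,2j}`. -/
def IsSigmaRecursion (u σ : ℝ) (f : ℕ → ℕ → ℝ) : Prop :=
  ∀ m n, f m (n + 1) = oddRow u σ (f (m - 1)) n + u * sigmaSum σ (f m) n

section SigmaRecursion

variable {u σ : ℝ} {f : ℕ → ℕ → ℝ}

lemma isSigmaRecursion_bdiff (hf : IsSigmaRecursion u σ f) : IsSigmaRecursion u σ (bdiff f) := by
  intro m n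
  simp only [bdiff, Pi.sub_apply, oddRow_sub, sigmaSum_sub, hf (m - 1) n, hf m n]
  ring

lemma isSigmaRecursion_iterate_bdiff (hf : IsSigmaRecursion u σ f) (k : ℕ) :
    IsSigmaRecursion u σ (bdiff^[k] f) := by
  induction k with
  | zero => exact hf
  | succ k ih => rw [Function.iterate_succ_apply']; exact isSigmaRecursion_bdiff ih

lemma IsSigmaRecursion.succ_sub_self (hf : IsSigmaRecursion u σ f) (m n : ℕ) :
    f m (n + 1) - f m n = oddRow u σ (bdiff f m) n := by
  rw [hf m n, bdiff, oddRow_sub, oddRow, oddRow]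
  ring

lemma IsSigmaRecursion.monotoneOn_iterate_bdiff (hf : IsSigmaRecursion u σ f) (hu : 0 ≤ u)
    (hσ : u - 1/2 < σ) (hbase : ∀ k m, k ≤ m → 0 < (bdiff^[k] f) m 0) (n : ℕ) :
    ∀ k m, k + n ≤ m → MonotoneOn ((bdiff^[k] f) m) (Set.Iic n) := by
  induction n with
  | zero =>
    intro k m _
    exact (Set.subsingleton_of_forall_eq 0 fun i hi => Nat.le_zero.mp hi).monotoneOn _
  | succ n ih =>
    intro k m hkm
    refine monotoneOn_Iic_succ (ih k m (by omega)) (sub_nonneg.mp ?_)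
    rw [(isSigmaRecursion_iterate_bdiff hf k).succ_sub_self, ← Function.iterate_succ_apply' bdiff]
    exact (oddRow_pos_of_monotoneOn hu hσ (ih (k + 1) m (by omega))
      (hbase (k + 1) m (by omega))).le

end SigmaRecursion

lemma isSigmaRecursion_sigEE (u σ : ℝ) : IsSigmaRecursion u σ (SigEE u σ) := by
  intro m n
  rw [SigEE, oddRow, sigmaSum, sigmaSum, show ((n : ℝ) + 1) + 1/2 + σ = n + 3/2 + σ by ring,
    ← sum_attach (range (n + 1)) (fun j => sigmaCoeff σ n j * SigEE u σ (m - 1) j),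
    ← sum_attach (range (n + 1)) (fun j => sigmaCoeff σ n j * SigEE u σ m j)]
  rfl

lemma sigEE_zero_zero (u σ : ℝ) : SigEE u σ 0 0 = 1 := by
  simp [SigEE]

lemma sigEE_succ_zero (u σ : ℝ) (m : ℕ) :
    SigEE u σ (m + 1) 0 = (m + u) / (m + 1) * SigEE u σ m 0 := by
  rw [SigEE, SigEE, prod_Icc_succ_top (by omega), mul_comm]
  push_cast
  field_simp
  ring

theorem sigma_pos (u σ : ℝ) (hu0 : 0 < u) (hu1 : u < 1) (hσ : u - 1/2 < σ) :
    ∀ m n : ℕ, n ≤ m → 0 < SigEE u σ m n ∧ 0 < SigOO u σ m n := by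
  intro m n hnm
  have hbase : ∀ k m, k ≤ m → 0 < (bdiff^[k] (SigEE u σ)) m 0 := fun k m hkm => by
    rw [iterate_bdiff_apply]
    refine (iterate_bdiff_pos_of_ratio hu0 hu1 ?_ (sigEE_succ_zero u σ) k m hkm).1
    simp [sigEE_zero_zero]
  have hmono : MonotoneOn (SigEE u σ m) (Set.Iic n) :=
    (isSigmaRecursion_sigEE u σ).monotoneOn_iterate_bdiff hu0.le hσ hbase n 0 m (by omega)
  have hrow0 : 0 < SigEE u σ m 0 := hbase 0 m m.zero_le
  exact ⟨hrow0.trans_le (hmono (Set.mem_Iic.mpr n.zero_le) Set.self_mem_Iic n.zero_le),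
    oddRow_pos_of_monotoneOn hu0.le hσ hmono hrow0⟩
end

section
/- With Σ_{k,ℓ} defined as in the recursive definition (parameters 0 < u < 1, σ > u - 1/2), for every k = 2m > 0 one has Σ_{k,0} = (u/m) Σ_{j=0}^{m-1} Σ_{2j,0}. -/
open Finset

section ProdOneSubDiv

variable {K : Type*} [Field K] [CharZero K] (u : K)

theorem succ_mul_prod_Icc_one_sub_div (m : ℕ) :
    ((m : K) + 1) * ∏ i ∈ Icc 1 (m + 1), (1 - (1 - u) / (i : K))
      = ((m : K) + u) * ∏ i ∈ Icc 1 m, (1 - (1 - u) / (i : K)) := by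
  rw [prod_Icc_succ_top (by omega : 1 ≤ m + 1)]
  have hm : ((m : K) + 1) ≠ 0 := by exact_mod_cast m.succ_ne_zero
  push_cast
  field_simp
  ring

theorem natCast_mul_prod_Icc_one_sub_div (m : ℕ) :
    (m : K) * ∏ i ∈ Icc 1 m, (1 - (1 - u) / (i : K))
      = u * ∑ j ∈ range m, ∏ i ∈ Icc 1 j, (1 - (1 - u) / (i : K)) := by
  induction m with
  | zero => simp
  | succ m ih =>
    rw [Nat.cast_succ, succ_mul_prod_Icc_one_sub_div, sum_range_succ, mul_add, ← ih]
    ring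

end ProdOneSubDiv

theorem SigEE_zero (u σ : ℝ) (m : ℕ) :
    SigEE u σ m 0 = ∏ i ∈ Icc 1 m, (1 - (1 - u) / (i : ℝ)) := by
  simp [SigEE]

theorem sigma_k0_sum_general (u σ : ℝ) :
    ∀ m : ℕ, 0 < m →
      SigEE u σ m 0 = u / (m : ℝ) * ∑ j ∈ Finset.range m, SigEE u σ j 0 := by
  intro m hm
  have hm' : (m : ℝ) ≠ 0 := by exact_mod_cast hm.ne'
  simp only [SigEE_zero]
  rw [div_mul_eq_mul_div, eq_div_iff hm', mul_comm, natCast_mul_prod_Icc_one_sub_div]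

theorem sigma_k0_sum (u σ : ℝ) (hu0 : 0 < u) (hu1 : u < 1) (hσ : u - 1/2 < σ) :
    ∀ m : ℕ, 0 < m →
      SigEE u σ m 0 = u / (m : ℝ) * ∑ j ∈ Finset.range m, SigEE u σ j 0 :=
  sigma_k0_sum_general u σ
end

section
/- Let α, β, γ, δ be real numbers satisfying α+β < 0, α+γ < 0, α+β+γ < 0, α+β+δ+1 < 0, and α+β+γ+δ+1 < 0. Then there exist ω > 0 and C > 0 such that for all naturals m ≥ n: (m+1)^α (n+1)^β Σ_{p=0}^{n} (m-p+1)^γ (p+1)^δ ≤ C (m+1)^{-ω} (n+1)^{-ω}. -/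
/-!
Split the sum at `p = m / 2`. For `2p ≤ m`, `(m - p + 1) ^ γ ≍ (m + 1) ^ γ`, and
`∑ (p + 1) ^ δ = O((n + 1) ^ (δ' + 1))` once `δ` is raised to some `δ' > -1`, which
`α + β + γ < 0` leaves room for. Indices with `2p > m` occur only when `m < 2n`, so that
`m + 1 ≍ n + 1`; there `(p + 1) ^ δ ≍ (n + 1) ^ δ` and
`∑ (m - p + 1) ^ γ = O((m + 1) ^ (γ' + 1))` for some `γ' ≥ γ` with `γ' > -1`. In both regimes
the weight becomes `(m + 1) ^ a * (n + 1) ^ b` with `a + b + 2ω ≤ 0` (and `a + ω ≤ 0` in the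
first), which is `O((m + 1) ^ (-ω) * (n + 1) ^ (-ω))` since `n ≤ m`.
-/

open Finset Real

lemma rpow_le_two_rpow_abs_mul_rpow {u v : ℝ} (c : ℝ) (hu : 0 < u) (hv : 0 < v)
    (huv : u ≤ 2 * v) (hvu : v ≤ 2 * u) : u ^ c ≤ 2 ^ |c| * v ^ c := by
  have hlog : |log u - log v| ≤ log 2 := by
    rw [abs_sub_le_iff, sub_le_iff_le_add, sub_le_iff_le_add, ← log_mul two_ne_zero hv.ne',
      ← log_mul two_ne_zero hu.ne']
    exact ⟨log_le_log hu huv, log_le_log hv hvu⟩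
  have key : log u * c ≤ log 2 * |c| + log v * c :=
    calc log u * c = (log u - log v) * c + log v * c := by ring
      _ ≤ |log u - log v| * |c| + log v * c := by
          linarith [abs_mul (log u - log v) c ▸ le_abs_self ((log u - log v) * c)]
      _ ≤ log 2 * |c| + log v * c := by gcongr
  rw [rpow_def_of_pos hu, rpow_def_of_pos two_pos, rpow_def_of_pos hv, ← exp_add]
  exact exp_le_exp.mpr key

lemma sum_range_add_one_rpow_le {t : ℝ} (ht : -1 < t) :
    ∃ K > (0 : ℝ), ∀ n : ℕ,
      ∑ p ∈ range (n + 1), ((p : ℝ) + 1) ^ t ≤ K * ((n : ℝ) + 1) ^ (t + 1) := by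
  rcases le_or_gt 0 t with ht0 | ht0
  · refine ⟨1, one_pos, fun n => ?_⟩
    calc ∑ p ∈ range (n + 1), ((p : ℝ) + 1) ^ t
        ≤ ∑ _p ∈ range (n + 1), ((n : ℝ) + 1) ^ t := by
          gcongr with p hp
          exact_mod_cast Nat.lt_succ_iff.mp (mem_range.mp hp)
      _ = 1 * ((n : ℝ) + 1) ^ (t + 1) := by
          rw [sum_const, card_range, nsmul_eq_mul, rpow_add_one (by positivity)]; push_cast; ring
  · have hpos : 0 < t + 1 := by linarith
    refine ⟨1 / (t + 1), one_div_pos.mpr hpos, fun n => ?_⟩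
    -- The comparison integral starts at `1`: `x ^ t` is not antitone on `[0, 1]`, as `0 ^ t = 0`.
    have hanti : AntitoneOn (fun x : ℝ => x ^ t) (Set.Icc 1 (1 + n)) :=
      fun a ha b _ hab => rpow_le_rpow_of_nonpos (by linarith [ha.1]) hab ht0.le
    have hint := hanti.sum_le_integral
    rw [integral_rpow (Or.inl ht), one_rpow, le_div_iff₀ hpos] at hint
    rw [sum_range_succ', Nat.cast_zero, zero_add, one_rpow, div_mul_eq_mul_div, one_mul,
      le_div_iff₀ hpos, sum_congr rfl fun i _ => by rw [add_comm (i.succ : ℝ)],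
      add_comm (n : ℝ)]
    nlinarith

lemma rpow_mul_rpow_le_one {x y a b : ℝ} (hy : 1 ≤ y) (hyx : y ≤ x) (ha : a ≤ 0)
    (hab : a + b ≤ 0) : x ^ a * y ^ b ≤ 1 := by
  have hy0 : 0 < y := by linarith
  rcases le_or_gt b 0 with hb | hb
  · exact mul_le_one₀ (rpow_le_one_of_one_le_of_nonpos (hy.trans hyx) ha) (by positivity)
      (rpow_le_one_of_one_le_of_nonpos hy hb)
  · have hx0 : 0 < x := by linarith
    calc x ^ a * y ^ b ≤ x ^ a * x ^ b :=
          mul_le_mul_of_nonneg_left (rpow_le_rpow hy0.le hyx hb.le) (rpow_nonneg hx0.le a)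
      _ = x ^ (a + b) := (rpow_add hx0 a b).symm
      _ ≤ 1 := rpow_le_one_of_one_le_of_nonpos (hy.trans hyx) hab

lemma rpow_mul_rpow_le_two_rpow_abs {x y a b : ℝ} (hy : 1 ≤ y) (hyx : y ≤ x)
    (hxy : x ≤ 2 * y) (hab : a + b ≤ 0) : x ^ a * y ^ b ≤ 2 ^ |a| := by
  have hy0 : 0 < y := by linarith
  calc x ^ a * y ^ b ≤ 2 ^ |a| * y ^ a * y ^ b := by
        gcongr; exact rpow_le_two_rpow_abs_mul_rpow a (by linarith) hy0 hxy (by linarith)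
    _ = 2 ^ |a| * y ^ (a + b) := by rw [rpow_add hy0]; ring
    _ ≤ 2 ^ |a| :=
        mul_le_of_le_one_right (by positivity) (rpow_le_one_of_one_le_of_nonpos hy hab)

lemma rpow_mul_rpow_eq_mul_rpow_neg {x y : ℝ} (hx : 0 < x) (hy : 0 < y) (a b ω : ℝ) :
    x ^ a * y ^ b = x ^ (a + ω) * y ^ (b + ω) * (x ^ (-ω) * y ^ (-ω)) := by
  rw [rpow_add hx, rpow_add hy, rpow_neg hx.le, rpow_neg hy.le]
  field_simp

lemma exists_le_and_neg_one_lt_and_add_neg {c d : ℝ} (hcd : c + d < 0) (hc : c < 1) :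
    ∃ d', d ≤ d' ∧ -1 < d' ∧ c + d' < 0 :=
  ⟨max d ((-1 - c) / 2), le_max_left _ _, lt_max_of_lt_right (by linarith),
    by rw [← lt_neg_iff_add_neg', max_lt_iff]; constructor <;> linarith⟩

lemma exists_pos_add_two_mul_nonpos {a b c : ℝ} (ha : a < 0) (hb : b < 0) (hc : c < 0) :
    ∃ ω > (0 : ℝ), a + 2 * ω ≤ 0 ∧ b + 2 * ω ≤ 0 ∧ c + 2 * ω ≤ 0 := by
  have := max_lt ha (max_lt hb hc)
  refine ⟨-max a (max b c) / 2, by linarith, ?_, ?_, ?_⟩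
  · linarith [le_max_left a (max b c)]
  · linarith [le_max_left b c, le_max_right a (max b c)]
  · linarith [le_max_right b c, le_max_right a (max b c)]

section ConvolutionSum

variable {α β γ δ : ℝ} {m n : ℕ}

lemma sub_add_one_rpow_le {p : ℕ} (h : 2 * p ≤ m) :
    ((m : ℝ) - p + 1) ^ γ ≤ 2 ^ |γ| * ((m : ℝ) + 1) ^ γ := by
  have h' : 2 * (p : ℝ) ≤ m := by exact_mod_cast h
  exact rpow_le_two_rpow_abs_mul_rpow γ (by linarith [p.cast_nonneg (α := ℝ)]) (by positivity)
    (by linarith [p.cast_nonneg (α := ℝ)]) (by linarith)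

lemma sum_sub_add_one_rpow_le (hnm : n ≤ m) :
    ∑ p ∈ range (n + 1), ((m : ℝ) - p + 1) ^ γ
      ≤ ∑ q ∈ range (m + 1), ((q : ℝ) + 1) ^ γ := by
  calc ∑ p ∈ range (n + 1), ((m : ℝ) - p + 1) ^ γ
      ≤ ∑ p ∈ range (m + 1), ((m : ℝ) - p + 1) ^ γ := by
        refine sum_le_sum_of_subset_of_nonneg (range_subset_range.mpr (by omega))
          fun p hp _ => ?_
        have : (p : ℝ) ≤ m := by exact_mod_cast Nat.lt_succ_iff.mp (mem_range.mp hp)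
        exact rpow_nonneg (by linarith) γ
    _ = ∑ q ∈ range (m + 1), ((q : ℝ) + 1) ^ γ := by
        rw [← sum_range_reflect]
        refine sum_congr rfl fun p hp => ?_
        rw [Nat.add_sub_cancel, Nat.cast_sub (Nat.lt_succ_iff.mp (mem_range.mp hp)),
          sub_sub_cancel]

lemma sum_rpow_mul_rpow_le_of_two_mul_le (h : 2 * n ≤ m) :
    ∑ p ∈ range (n + 1), ((m : ℝ) - p + 1) ^ γ * ((p : ℝ) + 1) ^ δ
      ≤ 2 ^ |γ| * ((m : ℝ) + 1) ^ γ * ∑ p ∈ range (n + 1), ((p : ℝ) + 1) ^ δ := by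
  rw [mul_sum]
  refine sum_le_sum fun p hp => ?_
  have hpn := Nat.lt_succ_iff.mp (mem_range.mp hp)
  exact mul_le_mul_of_nonneg_right (sub_add_one_rpow_le (by omega)) (by positivity)

lemma sum_rpow_mul_rpow_le_add (hnm : n ≤ m) :
    ∑ p ∈ range (n + 1), ((m : ℝ) - p + 1) ^ γ * ((p : ℝ) + 1) ^ δ
      ≤ 2 ^ |γ| * ((m : ℝ) + 1) ^ γ * ∑ p ∈ range (n + 1), ((p : ℝ) + 1) ^ δ
        + 2 ^ |δ| * ((n : ℝ) + 1) ^ δ * ∑ q ∈ range (m + 1), ((q : ℝ) + 1) ^ γ := by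
  have hterm : ∀ p ∈ range (n + 1), ((m : ℝ) - p + 1) ^ γ * ((p : ℝ) + 1) ^ δ
      ≤ 2 ^ |γ| * ((m : ℝ) + 1) ^ γ * ((p : ℝ) + 1) ^ δ
        + 2 ^ |δ| * ((n : ℝ) + 1) ^ δ * ((m : ℝ) - p + 1) ^ γ := by
    intro p hp
    have hpn := Nat.lt_succ_iff.mp (mem_range.mp hp)
    have hpm : (p : ℝ) ≤ m := by exact_mod_cast hpn.trans hnm
    have hpos : 0 ≤ ((m : ℝ) - p + 1) ^ γ := rpow_nonneg (by linarith) γ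
    rcases le_or_gt (2 * p) m with hsmall | hlarge
    · have := mul_le_mul_of_nonneg_right (sub_add_one_rpow_le (γ := γ) hsmall)
        (by positivity : (0 : ℝ) ≤ ((p : ℝ) + 1) ^ δ)
      have : 0 ≤ 2 ^ |δ| * ((n : ℝ) + 1) ^ δ * ((m : ℝ) - p + 1) ^ γ := by positivity
      linarith
    · have hlarge' : (m : ℝ) < 2 * p := by exact_mod_cast hlarge
      have hn : (n : ℝ) ≤ m := by exact_mod_cast hnm
      have hpn' : (p : ℝ) ≤ n := by exact_mod_cast hpn
      have := mul_le_mul_of_nonneg_left (rpow_le_two_rpow_abs_mul_rpow (u := (p : ℝ) + 1)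
        (v := (n : ℝ) + 1) δ (by positivity) (by positivity) (by linarith) (by linarith)) hpos
      have : 0 ≤ 2 ^ |γ| * ((m : ℝ) + 1) ^ γ * ((p : ℝ) + 1) ^ δ := by positivity
      linarith
  calc _ ≤ _ := sum_le_sum hterm
    _ = 2 ^ |γ| * ((m : ℝ) + 1) ^ γ * ∑ p ∈ range (n + 1), ((p : ℝ) + 1) ^ δ
        + 2 ^ |δ| * ((n : ℝ) + 1) ^ δ * ∑ p ∈ range (n + 1), ((m : ℝ) - p + 1) ^ γ := by
      rw [sum_add_distrib, mul_sum, mul_sum]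
    _ ≤ _ := by gcongr; exact sum_sub_add_one_rpow_le hnm

lemma weighted_sum_le_of_small_index {δ' ω K : ℝ} (hnm : n ≤ m) (hδ : δ ≤ δ')
    (hK₀ : 0 ≤ K)
    (hK : ∑ p ∈ range (n + 1), ((p : ℝ) + 1) ^ δ' ≤ K * ((n : ℝ) + 1) ^ (δ' + 1))
    (hω₁ : α + γ + ω ≤ 0) (hω₂ : α + β + γ + δ' + 1 + 2 * ω ≤ 0) :
    ((m : ℝ) + 1) ^ α * ((n : ℝ) + 1) ^ β *
        (2 ^ |γ| * ((m : ℝ) + 1) ^ γ * ∑ p ∈ range (n + 1), ((p : ℝ) + 1) ^ δ)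
      ≤ 2 ^ |γ| * K * (((m : ℝ) + 1) ^ (-ω) * ((n : ℝ) + 1) ^ (-ω)) := by
  have hx : (0 : ℝ) < m + 1 := by positivity
  have hy : (0 : ℝ) < n + 1 := by positivity
  have hyx : (n : ℝ) + 1 ≤ m + 1 := by gcongr
  have hsum : ∑ p ∈ range (n + 1), ((p : ℝ) + 1) ^ δ ≤ K * ((n : ℝ) + 1) ^ (δ' + 1) :=
    (sum_le_sum fun p _ =>
      rpow_le_rpow_of_exponent_le (by linarith [p.cast_nonneg (α := ℝ)]) hδ).trans hK
  calc _ ≤ ((m : ℝ) + 1) ^ α * ((n : ℝ) + 1) ^ β *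
        (2 ^ |γ| * ((m : ℝ) + 1) ^ γ * (K * ((n : ℝ) + 1) ^ (δ' + 1))) := by gcongr
    _ = 2 ^ |γ| * K * (((m : ℝ) + 1) ^ (α + γ) * ((n : ℝ) + 1) ^ (β + (δ' + 1))) := by
        rw [rpow_add hx α, rpow_add hy β]; ring
    _ ≤ _ := by
        rw [rpow_mul_rpow_eq_mul_rpow_neg hx hy _ _ ω]
        refine mul_le_mul_of_nonneg_left
          (mul_le_of_le_one_left (by positivity) ?_) (by positivity)
        exact rpow_mul_rpow_le_one (by linarith) hyx (by linarith) (by linarith)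

lemma weighted_sum_le_of_comparable {γ' ω K : ℝ} (hnm : n ≤ m) (hmn : m ≤ 2 * n + 1)
    (hγ : γ ≤ γ') (hK₀ : 0 ≤ K)
    (hK : ∑ q ∈ range (m + 1), ((q : ℝ) + 1) ^ γ' ≤ K * ((m : ℝ) + 1) ^ (γ' + 1))
    (hω : α + β + γ' + δ + 1 + 2 * ω ≤ 0) :
    ((m : ℝ) + 1) ^ α * ((n : ℝ) + 1) ^ β *
        (2 ^ |δ| * ((n : ℝ) + 1) ^ δ * ∑ q ∈ range (m + 1), ((q : ℝ) + 1) ^ γ)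
      ≤ 2 ^ |δ| * K * 2 ^ |α + (γ' + 1) + ω| *
          (((m : ℝ) + 1) ^ (-ω) * ((n : ℝ) + 1) ^ (-ω)) := by
  have hx : (0 : ℝ) < m + 1 := by positivity
  have hy : (0 : ℝ) < n + 1 := by positivity
  have hyx : (n : ℝ) + 1 ≤ m + 1 := by gcongr
  have hxy : (m : ℝ) + 1 ≤ 2 * ((n : ℝ) + 1) := by
    have : (m : ℝ) ≤ 2 * n + 1 := by exact_mod_cast hmn
    linarith
  have hsum : ∑ q ∈ range (m + 1), ((q : ℝ) + 1) ^ γ ≤ K * ((m : ℝ) + 1) ^ (γ' + 1) :=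
    (sum_le_sum fun q _ =>
      rpow_le_rpow_of_exponent_le (by linarith [q.cast_nonneg (α := ℝ)]) hγ).trans hK
  calc _ ≤ ((m : ℝ) + 1) ^ α * ((n : ℝ) + 1) ^ β *
        (2 ^ |δ| * ((n : ℝ) + 1) ^ δ * (K * ((m : ℝ) + 1) ^ (γ' + 1))) := by gcongr
    _ = 2 ^ |δ| * K * (((m : ℝ) + 1) ^ (α + (γ' + 1)) * ((n : ℝ) + 1) ^ (β + δ)) := by
        rw [rpow_add hx α, rpow_add hy β]; ring
    _ ≤ _ := by
        rw [rpow_mul_rpow_eq_mul_rpow_neg hx hy _ _ ω, ← mul_assoc]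
        refine mul_le_mul_of_nonneg_right
          (mul_le_mul_of_nonneg_left ?_ (by positivity)) (by positivity)
        exact rpow_mul_rpow_le_two_rpow_abs (by linarith) hyx hxy (by linarith)

end ConvolutionSum

theorem sum_power_estimate_general (α β γ δ : ℝ)
    (h2 : α + γ < 0) (h3 : α + β + γ < 0)
    (h4 : α + β + δ + 1 < 0) (h5 : α + β + γ + δ + 1 < 0) :
    ∃ ω > (0 : ℝ), ∃ C > (0 : ℝ), ∀ m n : ℕ, n ≤ m →
      ((m : ℝ) + 1) ^ α * ((n : ℝ) + 1) ^ β *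
          ∑ p ∈ Finset.range (n + 1), ((m : ℝ) - (p : ℝ) + 1) ^ γ * ((p : ℝ) + 1) ^ δ
        ≤ C * ((m : ℝ) + 1) ^ (-ω) * ((n : ℝ) + 1) ^ (-ω) := by
  obtain ⟨δ', hδ, hδ', hδ'₅⟩ := exists_le_and_neg_one_lt_and_add_neg
    (c := α + β + γ + 1) (d := δ) (by linarith) (by linarith)
  obtain ⟨γ', hγ, hγ', hγ'₅⟩ := exists_le_and_neg_one_lt_and_add_neg
    (c := α + β + δ + 1) (d := γ) (by linarith) (by linarith)
  obtain ⟨K₁, hK₁, hsum₁⟩ := sum_range_add_one_rpow_le hδ'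
  obtain ⟨K₂, hK₂, hsum₂⟩ := sum_range_add_one_rpow_le hγ'
  obtain ⟨ω, hω, hω₁, hω₂, hω₃⟩ := exists_pos_add_two_mul_nonpos h2 hδ'₅ hγ'₅
  refine ⟨ω, hω, 2 ^ |γ| * K₁ + 2 ^ |δ| * K₂ * 2 ^ |α + (γ' + 1) + ω|, by positivity,
    fun m n hnm => ?_⟩
  have hsmall := weighted_sum_le_of_small_index (α := α) (β := β) (γ := γ) (m := m) hnm hδ
    hK₁.le (hsum₁ n) (by linarith) (by linarith)
  rcases le_or_gt (2 * n) m with hfar | hnear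
  · calc _ ≤ ((m : ℝ) + 1) ^ α * ((n : ℝ) + 1) ^ β *
          (2 ^ |γ| * ((m : ℝ) + 1) ^ γ * ∑ p ∈ range (n + 1), ((p : ℝ) + 1) ^ δ) := by
          gcongr; exact sum_rpow_mul_rpow_le_of_two_mul_le hfar
      _ ≤ _ := hsmall
      _ ≤ _ := by
          rw [mul_assoc _ (_ ^ _)]; gcongr; exact le_add_of_nonneg_right (by positivity)
  · have hlarge := weighted_sum_le_of_comparable (α := α) (β := β) (δ := δ) (ω := ω) hnm
      (by omega) hγ hK₂.le (hsum₂ m) (by linarith)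
    calc _ ≤ _ := mul_le_mul_of_nonneg_left (sum_rpow_mul_rpow_le_add hnm) (by positivity)
      _ ≤ _ := (mul_add _ _ _).trans_le (add_le_add hsmall hlarge)
      _ = _ := by ring

theorem sum_power_estimate (α β γ δ : ℝ)
    (h1 : α + β < 0) (h2 : α + γ < 0) (h3 : α + β + γ < 0)
    (h4 : α + β + δ + 1 < 0) (h5 : α + β + γ + δ + 1 < 0) :
    ∃ ω > (0 : ℝ), ∃ C > (0 : ℝ), ∀ m n : ℕ, n ≤ m →
      ((m : ℝ) + 1) ^ α * ((n : ℝ) + 1) ^ β *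
          ∑ p ∈ Finset.range (n + 1), ((m : ℝ) - (p : ℝ) + 1) ^ γ * ((p : ℝ) + 1) ^ δ
        ≤ C * ((m : ℝ) + 1) ^ (-ω) * ((n : ℝ) + 1) ^ (-ω) :=
  sum_power_estimate_general α β γ δ h2 h3 h4 h5
end

section
/- Let α, β, γ, δ be real numbers with α+β < 0, α+γ < 0, β+δ < 0, α+β+γ+1 < 0, α+β+δ+1 < 0, and α+β+γ+δ+1 < 0. Then there exist ω > 0 and C > 0 such that for all naturals m, n: (m+1)^α (n+1)^β Σ_{p=0}^{min(m,n)} (m-p+1)^γ (n-p+1)^δ ≤ C (m+1)^{-ω} (n+1)^{-ω}. -/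
/-!
Assume `m ≤ n` (the other case is the same after swapping `(α, γ)` with `(β, δ)`) and put
`M = m + 1`, `N = n + 1`, `a = m - p + 1`, `b = n - p + 1`, so that `1 ≤ a ≤ M ≤ N`, `1 ≤ b ≤ N`
and `N ≤ M b`. Each term `M^α N^β a^γ b^δ` equals `a^(-(1+ω)) M^(-ω) N^(-ω)` times the monomial
`a^(γ+1+ω) b^δ M^(α+ω) N^(β+ω)`, and summing `a^(-(1+ω))` over `p` stays below a convergent
p-series. So it suffices that the monomial is at most `1`; after taking logarithms this is a linear
inequality on the cone cut out by the constraints above, which holds once `ω` is small enough for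
the strict hypotheses to survive with margin `3ω`.
-/

open Finset Real

lemma mul_le_max_zero_mul {g u x : ℝ} (hu : 0 ≤ u) (hux : u ≤ x) : g * u ≤ max g 0 * x := by
  rcases le_total g 0 with hg | hg
  · rw [max_eq_right hg, zero_mul]
    exact mul_nonpos_of_nonpos_of_nonneg hg hu
  · rw [max_eq_left hg]
    exact mul_le_mul_of_nonneg_left hux hg

lemma linear_form_nonpos_on_cone {g d e f u v x y : ℝ} (hu : 0 ≤ u) (hux : u ≤ x)
    (hxy : x ≤ y) (hv : 0 ≤ v) (hvy : v ≤ y) (hyxv : y ≤ x + v)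
    (hdf : d + f ≤ 0) (hef : e + f ≤ 0) (hgef : g + e + f ≤ 0) (hdef : d + e + f ≤ 0)
    (hgdef : g + d + e + f ≤ 0) :
    g * u + d * v + e * x + f * y ≤ 0 := by
  have hx : 0 ≤ x := hu.trans hux
  have hgu : g * u ≤ max g 0 * x := mul_le_max_zero_mul hu hux
  rcases le_total f 0 with hf | hf
  · have hdv : d * v ≤ max d 0 * y := mul_le_max_zero_mul hv hvy
    have hd : max d 0 + f ≤ 0 := by rcases max_cases d 0 with ⟨h, _⟩ | ⟨h, _⟩ <;> linarith
    have hy : (max d 0 + f) * y ≤ (max d 0 + f) * x := mul_le_mul_of_nonpos_left hxy hd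
    have hx' : (max g 0 + e + (max d 0 + f)) * x ≤ 0 := by
      refine mul_nonpos_of_nonpos_of_nonneg ?_ hx
      rcases max_cases g 0 with ⟨h, _⟩ | ⟨h, _⟩ <;> rcases max_cases d 0 with ⟨h', _⟩ | ⟨h', _⟩ <;>
        linarith
    linarith
  · have hy : f * y ≤ f * (x + v) := mul_le_mul_of_nonneg_left hyxv hf
    have hx' : (max g 0 + e + f) * x ≤ 0 := by
      refine mul_nonpos_of_nonpos_of_nonneg ?_ hx
      rcases max_cases g 0 with ⟨h, _⟩ | ⟨h, _⟩ <;> linarith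
    linarith [mul_nonpos_of_nonpos_of_nonneg hdf hv]

lemma rpow_monomial_le_one {a b M N g d e f : ℝ} (ha : 1 ≤ a) (haM : a ≤ M) (hMN : M ≤ N)
    (hb : 1 ≤ b) (hbN : b ≤ N) (hNMb : N ≤ M * b)
    (hdf : d + f ≤ 0) (hef : e + f ≤ 0) (hgef : g + e + f ≤ 0) (hdef : d + e + f ≤ 0)
    (hgdef : g + d + e + f ≤ 0) :
    a ^ g * b ^ d * M ^ e * N ^ f ≤ 1 := by
  have ha₀ : 0 < a := by linarith
  have hb₀ : 0 < b := by linarith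
  have hM₀ : 0 < M := by linarith
  have hN₀ : 0 < N := by linarith
  have hlog := linear_form_nonpos_on_cone (g := g) (d := d) (e := e) (f := f) (log_nonneg ha)
    (log_le_log ha₀ haM) (log_le_log hM₀ hMN) (log_nonneg hb) (log_le_log hb₀ hbN)
    (by rw [← log_mul hM₀.ne' hb₀.ne']; exact log_le_log hN₀ hNMb) hdf hef hgef hdef hgdef
  rw [rpow_def_of_pos ha₀, rpow_def_of_pos hb₀, rpow_def_of_pos hM₀, rpow_def_of_pos hN₀,
    ← exp_add, ← exp_add, ← exp_add, exp_le_one_iff]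
  linarith

lemma summable_nat_add_one_rpow_neg {s : ℝ} (hs : 1 < s) :
    Summable fun j : ℕ => ((j : ℝ) + 1) ^ (-s) := by
  simpa using (summable_nat_add_iff 1).2 (Real.summable_nat_rpow.2 (by linarith : -s < -1))

lemma sum_range_sub_add_one_rpow_neg_le_tsum {s : ℝ} (hs : 1 < s) (m : ℕ) :
    ∑ p ∈ range (m + 1), ((m : ℝ) - p + 1) ^ (-s) ≤ ∑' j : ℕ, ((j : ℝ) + 1) ^ (-s) := by
  calc ∑ p ∈ range (m + 1), ((m : ℝ) - p + 1) ^ (-s)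
      = ∑ p ∈ range (m + 1), (((m + 1 - 1 - p : ℕ) : ℝ) + 1) ^ (-s) :=
        sum_congr rfl fun p hp => by
          rw [Nat.add_sub_cancel, Nat.cast_sub (mem_range_succ_iff.1 hp)]
    _ = ∑ j ∈ range (m + 1), ((j : ℝ) + 1) ^ (-s) :=
        sum_range_reflect (fun j : ℕ => ((j : ℝ) + 1) ^ (-s)) (m + 1)
    _ ≤ ∑' j : ℕ, ((j : ℝ) + 1) ^ (-s) :=
        (summable_nat_add_one_rpow_neg hs).sum_le_tsum _ fun j _ => by positivity

noncomputable def symmSum (α β γ δ : ℝ) (m n : ℕ) : ℝ :=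
  ((m : ℝ) + 1) ^ α * ((n : ℝ) + 1) ^ β *
    ∑ p ∈ range (min m n + 1), ((m : ℝ) - (p : ℝ) + 1) ^ γ * ((n : ℝ) - (p : ℝ) + 1) ^ δ

lemma symmSum_comm (α β γ δ : ℝ) (m n : ℕ) : symmSum α β γ δ m n = symmSum β α δ γ n m := by
  simp only [symmSum, min_comm m n, mul_comm]

lemma rpow_eq_rpow_add_mul_rpow_neg {x : ℝ} (hx : 0 < x) (u t : ℝ) :
    x ^ u = x ^ (u + t) * x ^ (-t) := by
  rw [← rpow_add hx, add_neg_cancel_right]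

lemma symmSum_le_of_le {α β γ δ ω : ℝ} {m n : ℕ} (hω : 0 < ω) (hβδ : β + δ + ω ≤ 0)
    (hαβ : α + β + 2 * ω ≤ 0) (hαβγ : α + β + γ + 1 + 3 * ω ≤ 0) (hαβδ : α + β + δ + 2 * ω ≤ 0)
    (hαβγδ : α + β + γ + δ + 1 + 3 * ω ≤ 0) (hmn : m ≤ n) :
    symmSum α β γ δ m n ≤
      (∑' j : ℕ, ((j : ℝ) + 1) ^ (-(1 + ω))) * ((m : ℝ) + 1) ^ (-ω) * ((n : ℝ) + 1) ^ (-ω) := by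
  set M : ℝ := (m : ℝ) + 1
  set N : ℝ := (n : ℝ) + 1
  have hM : 1 ≤ M := by simp [M]
  have hMN : M ≤ N := by simp [M, N, hmn]
  have hterm : ∀ p ∈ range (m + 1),
      M ^ α * N ^ β * (((m : ℝ) - p + 1) ^ γ * ((n : ℝ) - p + 1) ^ δ) ≤
        ((m : ℝ) - p + 1) ^ (-(1 + ω)) * (M ^ (-ω) * N ^ (-ω)) := by
    intro p hp
    have hpm : (p : ℝ) ≤ m := by exact_mod_cast mem_range_succ_iff.1 hp
    set a : ℝ := (m : ℝ) - p + 1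
    set b : ℝ := (n : ℝ) - p + 1
    have ha : 1 ≤ a := by linarith
    have hb : 1 ≤ b := by linarith
    have hNMb : N ≤ M * b := by nlinarith
    have hmonomial : a ^ (γ + (1 + ω)) * b ^ δ * M ^ (α + ω) * N ^ (β + ω) ≤ 1 :=
      rpow_monomial_le_one ha (by linarith) hMN hb (by linarith) hNMb
        (by linarith) (by linarith) (by linarith) (by linarith) (by linarith)
    calc M ^ α * N ^ β * (a ^ γ * b ^ δ)
        = (a ^ (γ + (1 + ω)) * b ^ δ * M ^ (α + ω) * N ^ (β + ω)) *
            (a ^ (-(1 + ω)) * (M ^ (-ω) * N ^ (-ω))) := by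
          rw [rpow_eq_rpow_add_mul_rpow_neg (by linarith : 0 < a) γ (1 + ω),
            rpow_eq_rpow_add_mul_rpow_neg (by linarith : 0 < M) α ω,
            rpow_eq_rpow_add_mul_rpow_neg (by linarith : 0 < N) β ω]
          ring
      _ ≤ a ^ (-(1 + ω)) * (M ^ (-ω) * N ^ (-ω)) :=
          mul_le_of_le_one_left (by positivity) hmonomial
  calc symmSum α β γ δ m n
      = ∑ p ∈ range (m + 1), M ^ α * N ^ β * (((m : ℝ) - p + 1) ^ γ * ((n : ℝ) - p + 1) ^ δ) := by
        rw [symmSum, min_eq_left hmn, mul_sum]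
    _ ≤ ∑ p ∈ range (m + 1), ((m : ℝ) - p + 1) ^ (-(1 + ω)) * (M ^ (-ω) * N ^ (-ω)) :=
        sum_le_sum hterm
    _ ≤ (∑' j : ℕ, ((j : ℝ) + 1) ^ (-(1 + ω))) * (M ^ (-ω) * N ^ (-ω)) := by
        rw [← sum_mul]
        gcongr
        exact sum_range_sub_add_one_rpow_neg_le_tsum (by linarith) m
    _ = _ := (mul_assoc _ _ _).symm

theorem symmetric_sum_power_estimate (α β γ δ : ℝ)
    (h1 : α + β < 0) (h2 : α + γ < 0) (h3 : β + δ < 0)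
    (h4 : α + β + γ + 1 < 0) (h5 : α + β + δ + 1 < 0) (h6 : α + β + γ + δ + 1 < 0) :
    ∃ ω > (0 : ℝ), ∃ C > (0 : ℝ), ∀ m n : ℕ,
      ((m : ℝ) + 1) ^ α * ((n : ℝ) + 1) ^ β *
          ∑ p ∈ Finset.range (min m n + 1),
            ((m : ℝ) - (p : ℝ) + 1) ^ γ * ((n : ℝ) - (p : ℝ) + 1) ^ δ
        ≤ C * ((m : ℝ) + 1) ^ (-ω) * ((n : ℝ) + 1) ^ (-ω) := by
  set c := max (max (max (α + β) (α + γ)) (max (β + δ) (α + β + γ + 1)))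
    (max (α + β + δ + 1) (α + β + γ + δ + 1))
  have hc : c < 0 := by
    simp only [c, max_lt_iff]
    exact ⟨⟨⟨h1, h2⟩, h3, h4⟩, h5, h6⟩
  obtain ⟨hαβ, hαγ, hβδ, hαβγ, hαβδ, hαβγδ⟩ : α + β ≤ c ∧ α + γ ≤ c ∧ β + δ ≤ c ∧
      α + β + γ + 1 ≤ c ∧ α + β + δ + 1 ≤ c ∧ α + β + γ + δ + 1 ≤ c := by
    simp only [c, le_max_iff, le_refl, true_or, or_true, and_self]
  obtain ⟨ω, hω, hωc⟩ : ∃ ω : ℝ, 0 < ω ∧ 3 * ω = -c := ⟨-c / 3, by linarith, by ring⟩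
  refine ⟨ω, hω, ∑' j : ℕ, ((j : ℝ) + 1) ^ (-(1 + ω)),
    (summable_nat_add_one_rpow_neg (by linarith)).tsum_pos (fun j => by positivity) 0
      (by positivity), fun m n => ?_⟩
  change symmSum α β γ δ m n ≤ _
  rcases le_total m n with hmn | hnm
  · exact symmSum_le_of_le hω (by linarith) (by linarith) (by linarith) (by linarith)
      (by linarith) hmn
  · rw [symmSum_comm, mul_right_comm]
    exact symmSum_le_of_le hω (by linarith) (by linarith) (by linarith) (by linarith)
      (by linarith) hnm
end

section
/- Let σ > -1/2, s > 0, and for naturals m ≤ n define c'(m,n) = (-1)^{n-m} s^{1/2} √(n! Γ(m+1/2+σ)/(m! Γ(n+3/2+σ))). Then there exist ω > 0 and C > 0 (depending on σ) such that |c'(m,n)| ≤ C s^{1/2} (m+1)^{-ω} (n+1)^{-ω} for all m ≤ n. -/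
/-!
Write `a = σ + 1/2 > 0` and `b = min a 1`. The quantity under the square root is
`n! Γ(m + a) / (m! Γ(n + 1 + a)) = (m + a)⁻¹ ∏_{m < k ≤ n} k / (k + a)`, and each factor satisfies
`k / (k + a) ≤ k / (k + b) ≤ ((k + b) / (k + 1 + b)) ^ b` by weighted AM–GM, so the product
telescopes to at most `((m + 1 + b) / (n + 1 + b)) ^ b` (equivalently,
`n! / Γ(n + 1 + a) * (n + 1 + b) ^ b` is antitone in `n`). Hence the quantity is `O((n + 1) ^ (-b))`,
and since `m ≤ n` its square root is `O((m + 1) ^ (-b/4) (n + 1) ^ (-b/4))`.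
-/

open Real Nat

lemma mul_add_one_add_rpow_le_add_rpow {x b : ℝ} (hx : 0 ≤ x) (hb : 0 ≤ b) :
    x * (x + 1 + b) ^ b ≤ (x + b) ^ (1 + b) := by
  have h1b : 0 < 1 + b := by linarith
  have amgm : x ^ (1 / (1 + b)) * (x + 1 + b) ^ (b / (1 + b)) ≤ x + b := by
    convert geom_mean_le_arith_mean2_weighted (w₁ := 1 / (1 + b)) (w₂ := b / (1 + b))
      (by positivity) (by positivity) hx (by linarith : 0 ≤ x + 1 + b) (by field_simp) using 1
    field_simp
    ring
  calc x * (x + 1 + b) ^ b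
      = (x ^ (1 / (1 + b)) * (x + 1 + b) ^ (b / (1 + b))) ^ (1 + b) := by
        rw [mul_rpow (by positivity) (by positivity), ← rpow_mul hx, ← rpow_mul (by linarith)]
        field_simp
        rw [rpow_one]
    _ ≤ (x + b) ^ (1 + b) := by gcongr

lemma antitone_factorial_div_Gamma_mul_rpow {a b : ℝ} (hb : 0 < b) (hba : b ≤ a) :
    Antitone fun n : ℕ ↦ (n ! : ℝ) / Gamma (n + 1 + a) * (n + 1 + b) ^ b := by
  have ha : 0 < a := hb.trans_le hba
  refine antitone_nat_of_succ_le fun n ↦ ?_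
  have hΓ : 0 < Gamma (n + 1 + a) := Gamma_pos_of_pos (by positivity)
  have hshift : Gamma ((n + 1 : ℕ) + 1 + a) = (n + 1 + a) * Gamma (n + 1 + a) := by
    rw [← Gamma_add_one (by positivity)]
    push_cast
    ring_nf
  have key : (n + 1 : ℝ) * (n + 1 + 1 + b) ^ b ≤ (n + 1 + a) * (n + 1 + b) ^ b :=
    calc (n + 1 : ℝ) * (n + 1 + 1 + b) ^ b ≤ (n + 1 + b) ^ (1 + b) :=
          mul_add_one_add_rpow_le_add_rpow (by positivity) hb.le
      _ = (n + 1 + b) * (n + 1 + b) ^ b := by rw [rpow_add (by positivity), rpow_one]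
      _ ≤ (n + 1 + a) * (n + 1 + b) ^ b := by gcongr
  simp only [factorial_succ, hshift]
  push_cast
  rw [div_mul_eq_mul_div, div_mul_eq_mul_div, div_le_div_iff₀ (by positivity) hΓ]
  convert mul_le_mul_of_nonneg_left key (by positivity : (0 : ℝ) ≤ n ! * Gamma (n + 1 + a))
    using 1 <;> ring

lemma factorial_mul_Gamma_div_le {a b : ℝ} (hb : 0 < b) (hba : b ≤ a) {m n : ℕ} (hmn : m ≤ n) :
    (n ! : ℝ) * Gamma (m + a) / (m ! * Gamma (n + 1 + a))
      ≤ (m + 1 + b) ^ b / (m + a) * (n + 1 + b) ^ (-b) := by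
  have ha : 0 < a := hb.trans_le hba
  have hΓ : 0 < Gamma (m + a) := Gamma_pos_of_pos (by positivity)
  have hΓn : 0 < Gamma (n + 1 + a) := Gamma_pos_of_pos (by positivity)
  have hshift : Gamma (m + 1 + a) = (m + a) * Gamma (m + a) := by
    rw [← Gamma_add_one (by positivity)]
    ring_nf
  have hmono := antitone_factorial_div_Gamma_mul_rpow hb hba hmn
  simp only [hshift] at hmono
  rw [rpow_neg (by positivity), ← div_eq_mul_inv, div_div, le_div_iff₀ (by positivity)]
  calc (n ! : ℝ) * Gamma (m + a) / (m ! * Gamma (n + 1 + a)) * ((m + a) * (n + 1 + b) ^ b)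
      = n ! / Gamma (n + 1 + a) * (n + 1 + b) ^ b * ((m + a) * Gamma (m + a) / m !) := by
        field_simp
    _ ≤ m ! / ((m + a) * Gamma (m + a)) * (m + 1 + b) ^ b * ((m + a) * Gamma (m + a) / m !) := by
        gcongr
    _ = (m + 1 + b) ^ b := by
        field_simp

lemma factorial_mul_Gamma_div_le_rpow_min {a : ℝ} (ha : 0 < a) {m n : ℕ} (hmn : m ≤ n) :
    (n ! : ℝ) * Gamma (m + a) / (m ! * Gamma (n + 1 + a))
      ≤ (1 + 1 / a) * (n + 1) ^ (-min a 1) := by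
  set b := min a 1
  have hb : 0 < b := lt_min ha one_pos
  have hpow : (m + 1 + b : ℝ) ^ b ≤ m + 1 + a :=
    (rpow_le_self_of_one_le (by linarith [m.cast_nonneg (α := ℝ)]) (min_le_right a 1)).trans
      (by linarith [min_le_left a 1])
  have hfrac : (m + 1 + a : ℝ) / (m + a) ≤ 1 + 1 / a := by
    rw [div_le_iff₀ (by positivity)]
    field_simp
    nlinarith [m.cast_nonneg (α := ℝ)]
  calc (n ! : ℝ) * Gamma (m + a) / (m ! * Gamma (n + 1 + a))
      ≤ (m + 1 + b) ^ b / (m + a) * (n + 1 + b) ^ (-b) :=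
        factorial_mul_Gamma_div_le hb (min_le_left a 1) hmn
    _ ≤ (m + 1 + a) / (m + a) * (n + 1) ^ (-b) := by
        refine mul_le_mul (by gcongr) ?_ (by positivity) (by positivity)
        exact rpow_le_rpow_of_nonpos (by positivity) (by linarith) (by linarith)
    _ ≤ (1 + 1 / a) * (n + 1) ^ (-b) := by gcongr

lemma sqrt_rpow_neg_le_rpow_neg_mul_rpow_neg {x y b : ℝ} (hx : 0 < x) (hxy : x ≤ y) (hb : 0 ≤ b) :
    √(y ^ (-b)) ≤ x ^ (-(b / 4)) * y ^ (-(b / 4)) := by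
  have hy : 0 < y := hx.trans_le hxy
  calc √(y ^ (-b)) = y ^ (-(b / 4)) * y ^ (-(b / 4)) := by
        rw [sqrt_eq_rpow, ← rpow_mul hy.le, ← rpow_add hy]
        ring_nf
    _ ≤ x ^ (-(b / 4)) * y ^ (-(b / 4)) := by
        gcongr ?_ * _
        exact rpow_le_rpow_of_nonpos hx hxy (by linarith)

theorem cprime_estimate (σ s : ℝ) (hσ : -1/2 < σ) (hs : 0 < s) :
    ∃ ω > (0 : ℝ), ∃ C > (0 : ℝ), ∀ m n : ℕ, m ≤ n →
      |(-1 : ℝ) ^ (n - m) * s ^ ((1 : ℝ)/2) *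
          Real.sqrt ((n.factorial : ℝ) * Real.Gamma ((m : ℝ) + 1/2 + σ) /
            ((m.factorial : ℝ) * Real.Gamma ((n : ℝ) + 3/2 + σ)))|
        ≤ C * s ^ ((1 : ℝ)/2) * ((m : ℝ) + 1) ^ (-ω) * ((n : ℝ) + 1) ^ (-ω) := by
  have ha : 0 < 1 / 2 + σ := by linarith
  set a := 1 / 2 + σ
  refine ⟨min a 1 / 4, by positivity, √(1 + 1 / a), by positivity, fun m n hmn ↦ ?_⟩
  have hm : (m : ℝ) + 1 / 2 + σ = m + a := by ring
  have hn : (n : ℝ) + 3 / 2 + σ = n + 1 + a := by ring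
  have hsqrt : √((n ! : ℝ) * Gamma (m + a) / (m ! * Gamma (n + 1 + a)))
      ≤ √(1 + 1 / a) * ((m + 1) ^ (-(min a 1 / 4)) * (n + 1) ^ (-(min a 1 / 4))) := by
    grw [factorial_mul_Gamma_div_le_rpow_min ha hmn, sqrt_mul (by positivity),
      sqrt_rpow_neg_le_rpow_neg_mul_rpow_neg (x := m + 1) (by positivity) (by gcongr) (by positivity)]
  rw [hm, hn, abs_mul, abs_mul, abs_pow, abs_neg, abs_one, one_pow, one_mul,
    abs_of_nonneg (by positivity), abs_of_nonneg (by positivity)]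
  exact (mul_le_mul_of_nonneg_left hsqrt (by positivity)).trans_eq (by ring)
end
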